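/- Zero belongs to the resolvent set of 𝔸: the operator 𝔸 : D(𝔸) → Y is bijective, its inverse is given explicitly by 𝔸⁻¹(u,v,w) = ( −γ⁻¹(βu + δv + A⁻¹(αv + w)), u, v ) for (u,v,w) ∈ Y, and there exists a constant C > 0 such that ‖𝔸⁻¹(u,v,w)‖_Y ≤ C ‖(u,v,w)‖_Y for all (u,v,w) ∈ Y. -/

import Mathlib

open Filter Topology

noncomputable section

local notation "⟪" x ", " y "⟫" => @inner ℝ _ _ x y

variable {X : Type*} [NormedAddCommGroup X] [InnerProductSpace ℝ X] [CompleteSpace X]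

/-- Membership in the fractional power space `X^{1/2}` (here `2σ = 1`). -/
def memHalf (e : HilbertBasis ℕ ℝ X) (lam : ℕ → ℝ) (φ : X) : Prop :=
  Summable fun k => lam k * ⟪φ, e k⟫ ^ 2

/-- Membership in the fractional power space `X^1` (here `2σ = 2`). -/
def memOne (e : HilbertBasis ℕ ℝ X) (lam : ℕ → ℝ) (φ : X) : Prop :=
  Summable fun k => lam k ^ 2 * ⟪φ, e k⟫ ^ 2

/-- The squared `X^{1/2}`-norm: `‖φ‖²_{X^{1/2}} = ∑_k λ_k ⟨φ,e_k⟩²`. -/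
def nHalfSq (e : HilbertBasis ℕ ℝ X) (lam : ℕ → ℝ) (φ : X) : ℝ :=
  ∑' k, lam k * ⟪φ, e k⟫ ^ 2

/-- The squared `X^{-1/2}`-norm of an element of `X`: `∑_k λ_k⁻¹ ⟨φ,e_k⟩²`. -/
def nNegSq (e : HilbertBasis ℕ ℝ X) (lam : ℕ → ℝ) (φ : X) : ℝ :=
  ∑' k, (lam k)⁻¹ * ⟪φ, e k⟫ ^ 2

/-- The diagonal operator `A φ = ∑_k λ_k ⟨φ,e_k⟩ e_k`. -/
def Aop (e : HilbertBasis ℕ ℝ X) (lam : ℕ → ℝ) (φ : X) : X :=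
  ∑' k, (lam k * ⟪φ, e k⟫) • e k

/-- The inverse operator `A⁻¹ φ = ∑_k λ_k⁻¹ ⟨φ,e_k⟩ e_k`. -/
def Ainv (e : HilbertBasis ℕ ℝ X) (lam : ℕ → ℝ) (φ : X) : X :=
  ∑' k, ((lam k)⁻¹ * ⟪φ, e k⟫) • e k

/-- The norm of `Y = X^{1/2} × X^{1/2} × X`. -/
def Ynorm (e : HilbertBasis ℕ ℝ X) (lam : ℕ → ℝ) (u v w : X) : ℝ :=
  Real.sqrt (nHalfSq e lam u + nHalfSq e lam v + ‖w‖ ^ 2)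

/-!
Everything is diagonal in the basis `e`: `A` and `A⁻¹` multiply the `k`-th coefficient by
`λ_k` and `λ_k⁻¹`. The first component `x` of `𝔸⁻¹(u,v,w)` is chosen so that
`βu + γx + δv = A⁻¹(-(αv + w))`, whence `𝔸(x,u,v) = (u,v,w)`; injectivity reduces to that of
`A` (all `λ_k ≠ 0`). For the bound, `‖A⁻¹z‖²_{X^{1/2}} = ‖z‖²_{X^{-1/2}} ≤ λ₀⁻¹‖z‖²` and
`‖v‖² ≤ λ₀⁻¹‖v‖²_{X^{1/2}}`.
-/

section

variable {E : Type*} [NormedAddCommGroup E] [InnerProductSpace ℝ E]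

namespace HilbertBasis

variable (e : HilbertBasis ℕ ℝ E)

theorem hasSum_inner_sq (φ : E) : HasSum (fun k => ⟪φ, e k⟫ ^ 2) (‖φ‖ ^ 2) := by
  simpa only [real_inner_comm φ, ← sq, real_inner_self_eq_norm_sq] using
    e.hasSum_inner_mul_inner φ φ

theorem summable_inner_sq (φ : E) : Summable fun k => ⟪φ, e k⟫ ^ 2 :=
  (e.hasSum_inner_sq φ).summable

theorem inner_tsum_smul {c : ℕ → ℝ} (hc : Summable fun k => c k ^ 2) (j : ℕ) :
    ⟪∑' k, c k • e k, e j⟫ = c j := by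
  have hmem : Memℓp c 2 := memℓp_gen <| by simpa using hc
  rw [(e.hasSum_repr_symm ⟨c, hmem⟩).tsum_eq, real_inner_comm, ← e.repr_apply_apply,
    LinearIsometryEquiv.apply_symm_apply]

theorem ext_inner {φ ψ : E} (h : ∀ k, ⟪φ, e k⟫ = ⟪ψ, e k⟫) : φ = ψ :=
  e.repr.injective <| lp.ext <| funext fun k => by
    simp only [e.repr_apply_apply, real_inner_comm, h k]

end HilbertBasis

section DiagonalModel

variable (e : HilbertBasis ℕ ℝ E) {lam : ℕ → ℝ}

theorem inner_Aop {φ : E} (hφ : memOne e lam φ) (k : ℕ) :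
    ⟪Aop e lam φ, e k⟫ = lam k * ⟪φ, e k⟫ :=
  e.inner_tsum_smul (hφ.congr fun k => by ring) k

theorem eq_of_Aop_eq (hne : ∀ k, lam k ≠ 0) {φ ψ : E} (hφ : memOne e lam φ)
    (hψ : memOne e lam ψ) (h : Aop e lam φ = Aop e lam ψ) : φ = ψ :=
  e.ext_inner fun k => mul_left_cancel₀ (hne k) <| by
    rw [← inner_Aop e hφ, ← inner_Aop e hψ, h]

theorem Ainv_neg (ψ : E) : Ainv e lam (-ψ) = -Ainv e lam ψ := by
  simp only [Ainv, inner_neg_left, mul_neg, neg_smul, tsum_neg]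

theorem nHalfSq_nonneg (hnonneg : ∀ k, 0 ≤ lam k) (φ : E) : 0 ≤ nHalfSq e lam φ :=
  tsum_nonneg fun k => mul_nonneg (hnonneg k) (sq_nonneg _)

theorem memHalf_smul (c : ℝ) {φ : E} (hφ : memHalf e lam φ) : memHalf e lam (c • φ) :=
  (hφ.mul_left (c ^ 2)).congr fun k => by rw [real_inner_smul_left]; ring

theorem nHalfSq_smul (c : ℝ) (φ : E) : nHalfSq e lam (c • φ) = c ^ 2 * nHalfSq e lam φ := by
  rw [nHalfSq, nHalfSq, ← tsum_mul_left]
  congr 1 with k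
  rw [real_inner_smul_left]
  ring

theorem weighted_inner_add_sq_le (hnonneg : ∀ k, 0 ≤ lam k) (φ ψ : E) (k : ℕ) :
    lam k * ⟪φ + ψ, e k⟫ ^ 2 ≤ 2 * (lam k * ⟪φ, e k⟫ ^ 2) + 2 * (lam k * ⟪ψ, e k⟫ ^ 2) := by
  rw [inner_add_left]
  nlinarith [mul_le_mul_of_nonneg_left (add_sq_le (a := ⟪φ, e k⟫) (b := ⟪ψ, e k⟫)) (hnonneg k)]

theorem memHalf_add (hnonneg : ∀ k, 0 ≤ lam k) {φ ψ : E} (hφ : memHalf e lam φ)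
    (hψ : memHalf e lam ψ) : memHalf e lam (φ + ψ) :=
  Summable.of_nonneg_of_le (fun k => mul_nonneg (hnonneg k) (sq_nonneg _))
    (weighted_inner_add_sq_le e hnonneg φ ψ) ((hφ.mul_left 2).add (hψ.mul_left 2))

theorem nHalfSq_add_le (hnonneg : ∀ k, 0 ≤ lam k) {φ ψ : E} (hφ : memHalf e lam φ)
    (hψ : memHalf e lam ψ) :
    nHalfSq e lam (φ + ψ) ≤ 2 * nHalfSq e lam φ + 2 * nHalfSq e lam ψ := by
  refine (Summable.tsum_le_tsum (weighted_inner_add_sq_le e hnonneg φ ψ)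
    (memHalf_add e hnonneg hφ hψ) ((hφ.mul_left 2).add (hψ.mul_left 2))).trans_eq ?_
  rw [(hφ.mul_left 2).tsum_add (hψ.mul_left 2), tsum_mul_left, tsum_mul_left, nHalfSq, nHalfSq]

variable {lam0 : ℝ} (hlam0 : 0 < lam0) (hlam : ∀ k, lam0 ≤ lam k)
include hlam0 hlam

theorem summable_Ainv_coeff_sq (ψ : E) : Summable fun k => ((lam k)⁻¹ * ⟪ψ, e k⟫) ^ 2 := by
  refine Summable.of_nonneg_of_le (fun k => sq_nonneg _) (fun k => ?_)
    ((e.summable_inner_sq ψ).mul_left (lam0⁻¹ ^ 2))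
  rw [mul_pow]
  gcongr ?_ * _
  exact pow_le_pow_left₀ (inv_nonneg.2 (hlam0.trans_le (hlam k)).le) (inv_anti₀ hlam0 (hlam k)) 2

theorem inner_Ainv (ψ : E) (k : ℕ) : ⟪Ainv e lam ψ, e k⟫ = (lam k)⁻¹ * ⟪ψ, e k⟫ :=
  e.inner_tsum_smul (summable_Ainv_coeff_sq e hlam0 hlam ψ) k

theorem memOne_Ainv (ψ : E) : memOne e lam (Ainv e lam ψ) :=
  (e.summable_inner_sq ψ).congr fun k => by
    rw [inner_Ainv e hlam0 hlam]
    field_simp [(hlam0.trans_le (hlam k)).ne']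

theorem Aop_Ainv (ψ : E) : Aop e lam (Ainv e lam ψ) = ψ :=
  e.ext_inner fun k => by
    rw [inner_Aop e (memOne_Ainv e hlam0 hlam ψ), inner_Ainv e hlam0 hlam,
      mul_inv_cancel_left₀ (hlam0.trans_le (hlam k)).ne']

theorem nHalfSq_Ainv (ψ : E) : nHalfSq e lam (Ainv e lam ψ) = nNegSq e lam ψ := by
  rw [nHalfSq, nNegSq]
  congr 1 with k
  rw [inner_Ainv e hlam0 hlam]
  field_simp [(hlam0.trans_le (hlam k)).ne']

theorem inv_weight_inner_sq_le (ψ : E) (k : ℕ) :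
    (lam k)⁻¹ * ⟪ψ, e k⟫ ^ 2 ≤ lam0⁻¹ * ⟪ψ, e k⟫ ^ 2 :=
  mul_le_mul_of_nonneg_right (inv_anti₀ hlam0 (hlam k)) (sq_nonneg _)

theorem summable_inv_weight_inner_sq (ψ : E) : Summable fun k => (lam k)⁻¹ * ⟪ψ, e k⟫ ^ 2 :=
  Summable.of_nonneg_of_le
    (fun k => mul_nonneg (inv_nonneg.2 (hlam0.trans_le (hlam k)).le) (sq_nonneg _))
    (inv_weight_inner_sq_le e hlam0 hlam ψ) ((e.summable_inner_sq ψ).mul_left lam0⁻¹)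

theorem memHalf_Ainv (ψ : E) : memHalf e lam (Ainv e lam ψ) :=
  (summable_inv_weight_inner_sq e hlam0 hlam ψ).congr fun k => by
    rw [inner_Ainv e hlam0 hlam]
    field_simp [(hlam0.trans_le (hlam k)).ne']

theorem nNegSq_le (ψ : E) : nNegSq e lam ψ ≤ lam0⁻¹ * ‖ψ‖ ^ 2 := by
  rw [← (e.hasSum_inner_sq ψ).tsum_eq, ← tsum_mul_left]
  exact Summable.tsum_le_tsum (inv_weight_inner_sq_le e hlam0 hlam ψ)
    (summable_inv_weight_inner_sq e hlam0 hlam ψ)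
    ((e.summable_inner_sq ψ).mul_left lam0⁻¹)

theorem norm_sq_le_nHalfSq {φ : E} (hφ : memHalf e lam φ) :
    ‖φ‖ ^ 2 ≤ lam0⁻¹ * nHalfSq e lam φ := by
  rw [← (e.hasSum_inner_sq φ).tsum_eq, nHalfSq, ← tsum_mul_left]
  refine Summable.tsum_le_tsum (fun k => ?_) (e.summable_inner_sq φ) (hφ.mul_left lam0⁻¹)
  rw [← mul_assoc]
  refine le_mul_of_one_le_left (sq_nonneg _) ?_
  rw [inv_mul_eq_div, one_le_div hlam0]
  exact hlam k

end DiagonalModel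

section Resolvent

variable (e : HilbertBasis ℕ ℝ E) (lam : ℕ → ℝ) (α β γ δ : ℝ)

/-- The first component of `𝔸⁻¹(u,v,w)`. -/
def resolventFst (u v w : E) : E :=
  (-γ⁻¹) • (β • u + δ • v + Ainv e lam (α • v + w))

theorem add_smul_resolventFst_add {γ : ℝ} (hγ : γ ≠ 0) (u v w : E) :
    β • u + γ • resolventFst e lam α β γ δ u v w + δ • v = Ainv e lam (-(α • v + w)) := by
  rw [resolventFst, smul_smul, mul_neg, mul_inv_cancel₀ hγ, neg_one_smul, Ainv_neg]
  abel

variable {lam} {lam0 : ℝ} (hlam0 : 0 < lam0) (hlam : ∀ k, lam0 ≤ lam k)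
include hlam0 hlam

theorem memHalf_resolventFst {u v : E} (hu : memHalf e lam u) (hv : memHalf e lam v) (w : E) :
    memHalf e lam (resolventFst e lam α β γ δ u v w) := by
  have hnonneg : ∀ k, 0 ≤ lam k := fun k => hlam0.le.trans (hlam k)
  exact memHalf_smul e _ <| memHalf_add e hnonneg
    (memHalf_add e hnonneg (memHalf_smul e β hu) (memHalf_smul e δ hv))
    (memHalf_Ainv e hlam0 hlam _)

theorem nHalfSq_resolventFst_le {u v : E} (hu : memHalf e lam u) (hv : memHalf e lam v) (w : E) :
    nHalfSq e lam (resolventFst e lam α β γ δ u v w) ≤ 4 * γ⁻¹ ^ 2 *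
      (β ^ 2 * nHalfSq e lam u + (δ ^ 2 + α ^ 2 * lam0⁻¹ ^ 2) * nHalfSq e lam v +
        lam0⁻¹ * ‖w‖ ^ 2) := by
  have hnonneg : ∀ k, 0 ≤ lam k := fun k => hlam0.le.trans (hlam k)
  have hβu := memHalf_smul e β hu
  have hδv := memHalf_smul e δ hv
  have hz : ‖α • v + w‖ ^ 2 ≤ 2 * (α ^ 2 * (lam0⁻¹ * nHalfSq e lam v)) + 2 * ‖w‖ ^ 2 :=
    calc ‖α • v + w‖ ^ 2 ≤ (‖α • v‖ + ‖w‖) ^ 2 := by gcongr; exact norm_add_le _ _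
      _ ≤ 2 * (‖α • v‖ ^ 2 + ‖w‖ ^ 2) := add_sq_le
      _ = 2 * (α ^ 2 * ‖v‖ ^ 2) + 2 * ‖w‖ ^ 2 := by
        rw [norm_smul, mul_pow, Real.norm_eq_abs, sq_abs]; ring
      _ ≤ _ := by gcongr; exact norm_sq_le_nHalfSq e hlam0 hlam hv
  calc nHalfSq e lam (resolventFst e lam α β γ δ u v w)
      = γ⁻¹ ^ 2 * nHalfSq e lam (β • u + δ • v + Ainv e lam (α • v + w)) := by
        rw [resolventFst, nHalfSq_smul, neg_sq]
    _ ≤ γ⁻¹ ^ 2 * (2 * (2 * nHalfSq e lam (β • u) + 2 * nHalfSq e lam (δ • v)) +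
          2 * (lam0⁻¹ * ‖α • v + w‖ ^ 2)) := by
        gcongr
        refine (nHalfSq_add_le e hnonneg (memHalf_add e hnonneg hβu hδv)
          (memHalf_Ainv e hlam0 hlam _)).trans ?_
        gcongr
        · exact nHalfSq_add_le e hnonneg hβu hδv
        · exact (nHalfSq_Ainv e hlam0 hlam _).trans_le (nNegSq_le e hlam0 hlam _)
    _ ≤ γ⁻¹ ^ 2 * (2 * (2 * nHalfSq e lam (β • u) + 2 * nHalfSq e lam (δ • v)) +
          2 * (lam0⁻¹ * (2 * (α ^ 2 * (lam0⁻¹ * nHalfSq e lam v)) + 2 * ‖w‖ ^ 2))) := by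
        gcongr
    _ = _ := by rw [nHalfSq_smul, nHalfSq_smul]; ring

theorem exists_Ynorm_resolventFst_le : ∃ C : ℝ, 0 < C ∧ ∀ u v w : E, memHalf e lam u →
    memHalf e lam v → Ynorm e lam (resolventFst e lam α β γ δ u v w) u v ≤
      C * Ynorm e lam u v w := by
  have hnonneg : ∀ k, 0 ≤ lam k := fun k => hlam0.le.trans (hlam k)
  set K := 4 * γ⁻¹ ^ 2 * (β ^ 2 + δ ^ 2 + α ^ 2 * lam0⁻¹ ^ 2 + lam0⁻¹) + 1 + lam0⁻¹
  have hK : 0 < K := by positivity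
  refine ⟨√K, Real.sqrt_pos.2 hK, fun u v w hu hv => ?_⟩
  set S := nHalfSq e lam u + nHalfSq e lam v + ‖w‖ ^ 2
  have hqu := nHalfSq_nonneg e hnonneg u
  have hqv := nHalfSq_nonneg e hnonneg v
  have hu_le : nHalfSq e lam u ≤ S := by linarith [sq_nonneg ‖w‖]
  have hv_le : nHalfSq e lam v ≤ S := by linarith [sq_nonneg ‖w‖]
  have hw_le : ‖w‖ ^ 2 ≤ S := by linarith
  have hlam0_inv : 0 ≤ lam0⁻¹ := inv_nonneg.2 hlam0.le
  have hx : nHalfSq e lam (resolventFst e lam α β γ δ u v w) ≤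
      4 * γ⁻¹ ^ 2 * (β ^ 2 * S + (δ ^ 2 + α ^ 2 * lam0⁻¹ ^ 2) * S + lam0⁻¹ * S) :=
    (nHalfSq_resolventFst_le e α β γ δ hlam0 hlam hu hv w).trans (by gcongr)
  have hv2 : ‖v‖ ^ 2 ≤ lam0⁻¹ * S :=
    (norm_sq_le_nHalfSq e hlam0 hlam hv).trans (by gcongr)
  have key : nHalfSq e lam (resolventFst e lam α β γ δ u v w) + nHalfSq e lam u + ‖v‖ ^ 2 ≤
      K * S := by
    linear_combination hx + hu_le + hv2
  rw [Ynorm, Ynorm, ← Real.sqrt_mul hK.le]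
  exact Real.sqrt_le_sqrt key

end Resolvent

end

theorem zero_in_resolvent_set_general
    (e : HilbertBasis ℕ ℝ X) (lam : ℕ → ℝ) (lam0 : ℝ)
    (hlam0 : 0 < lam0) (hlam : ∀ k, lam0 ≤ lam k)
    (α β γ δ : ℝ) (hγ : 0 < γ) :
    -- surjectivity, with the explicit formula for the preimage:
    -- for every `(u,v,w) ∈ Y` the triple `((-γ⁻¹)•(βu+δv+A⁻¹(αv+w)), u, v)`
    -- belongs to `D(𝔸)` and is mapped by `𝔸` onto `(u,v,w)`
    (∀ u v w : X, memHalf e lam u → memHalf e lam v →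
      memHalf e lam ((-γ⁻¹) • (β • u + δ • v + Ainv e lam (α • v + w))) ∧
      memOne e lam
        (β • u + γ • ((-γ⁻¹) • (β • u + δ • v + Ainv e lam (α • v + w))) + δ • v) ∧
      (-α) • v - Aop e lam
        (β • u + γ • ((-γ⁻¹) • (β • u + δ • v + Ainv e lam (α • v + w))) + δ • v) = w) ∧
    -- injectivity of `𝔸` on `D(𝔸)`
    (∀ u₁ v₁ w₁ u₂ v₂ w₂ : X,
      memHalf e lam u₁ → memHalf e lam v₁ → memHalf e lam w₁ →
      memOne e lam (β • v₁ + γ • u₁ + δ • w₁) →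
      memHalf e lam u₂ → memHalf e lam v₂ → memHalf e lam w₂ →
      memOne e lam (β • v₂ + γ • u₂ + δ • w₂) →
      v₁ = v₂ → w₁ = w₂ →
      (-α) • w₁ - Aop e lam (β • v₁ + γ • u₁ + δ • w₁) =
        (-α) • w₂ - Aop e lam (β • v₂ + γ • u₂ + δ • w₂) →
      u₁ = u₂ ∧ v₁ = v₂ ∧ w₁ = w₂) ∧
    -- boundedness of `𝔸⁻¹` on `Y`
    (∃ C : ℝ, 0 < C ∧ ∀ u v w : X, memHalf e lam u → memHalf e lam v →
      Ynorm e lam ((-γ⁻¹) • (β • u + δ • v + Ainv e lam (α • v + w))) u v ≤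
        C * Ynorm e lam u v w) := by
  refine ⟨fun u v w hu hv => ?_, ?_, exists_Ynorm_resolventFst_le e α β γ δ hlam0 hlam⟩
  · have hcomb := add_smul_resolventFst_add e lam α β δ hγ.ne' u v w
    unfold resolventFst at hcomb
    refine ⟨memHalf_resolventFst e α β γ δ hlam0 hlam hu hv w, ?_, ?_⟩
    · rw [hcomb]
      exact memOne_Ainv e hlam0 hlam _
    · rw [hcomb, Aop_Ainv e hlam0 hlam]
      module
  · rintro u₁ v₁ w₁ u₂ v₂ w₂ - - - hD₁ - - - hD₂ rfl rfl hA
    have hD := eq_of_Aop_eq e (fun k => (hlam0.trans_le (hlam k)).ne') hD₁ hD₂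
      (sub_right_injective hA)
    exact ⟨smul_right_injective X hγ.ne' (add_left_cancel (add_right_cancel hD)), rfl, rfl⟩

/-- Zero belongs to the resolvent set of `𝔸`: the operator
`𝔸 : D(𝔸) → Y` is bijective, its inverse is given explicitly by
`𝔸⁻¹(u,v,w) = (-γ⁻¹(βu + δv + A⁻¹(αv + w)), u, v)`, and `𝔸⁻¹` is bounded on `Y`. -/
theorem zero_in_resolvent_set
    (e : HilbertBasis ℕ ℝ X) (lam : ℕ → ℝ) (lam0 : ℝ)
    (hlam0 : 0 < lam0) (hlam : ∀ k, lam0 ≤ lam k)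
    (α β γ δ : ℝ) (hα : 0 < α) (hβ : 0 < β) (hγ : 0 < γ) (hδ : 0 < δ) :
    -- surjectivity, with the explicit formula for the preimage:
    -- for every `(u,v,w) ∈ Y` the triple `((-γ⁻¹)•(βu+δv+A⁻¹(αv+w)), u, v)`
    -- belongs to `D(𝔸)` and is mapped by `𝔸` onto `(u,v,w)`
    (∀ u v w : X, memHalf e lam u → memHalf e lam v →
      memHalf e lam ((-γ⁻¹) • (β • u + δ • v + Ainv e lam (α • v + w))) ∧
      memOne e lam
        (β • u + γ • ((-γ⁻¹) • (β • u + δ • v + Ainv e lam (α • v + w))) + δ • v) ∧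
      (-α) • v - Aop e lam
        (β • u + γ • ((-γ⁻¹) • (β • u + δ • v + Ainv e lam (α • v + w))) + δ • v) = w) ∧
    -- injectivity of `𝔸` on `D(𝔸)`
    (∀ u₁ v₁ w₁ u₂ v₂ w₂ : X,
      memHalf e lam u₁ → memHalf e lam v₁ → memHalf e lam w₁ →
      memOne e lam (β • v₁ + γ • u₁ + δ • w₁) →
      memHalf e lam u₂ → memHalf e lam v₂ → memHalf e lam w₂ →
      memOne e lam (β • v₂ + γ • u₂ + δ • w₂) →
      v₁ = v₂ → w₁ = w₂ →
      (-α) • w₁ - Aop e lam (β • v₁ + γ • u₁ + δ • w₁) =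
        (-α) • w₂ - Aop e lam (β • v₂ + γ • u₂ + δ • w₂) →
      u₁ = u₂ ∧ v₁ = v₂ ∧ w₁ = w₂) ∧
    -- boundedness of `𝔸⁻¹` on `Y`
    (∃ C : ℝ, 0 < C ∧ ∀ u v w : X, memHalf e lam u → memHalf e lam v →
      Ynorm e lam ((-γ⁻¹) • (β • u + δ • v + Ainv e lam (α • v + w))) u v ≤
        C * Ynorm e lam u v w) :=
  zero_in_resolvent_set_general e lam lam0 hlam0 hlam α β γ δ hγ
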